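/- arXiv:2304.10952 — 7 statements merged into one kernel-verified Lean document; each statement's English description precedes it below -/
import Mathlib

section
/- Let $k \geq 1$ be a natural number and $p \in [0, 3/4]$. Let $\tilde F = (1-p)^{4k}$ and $F_{\mathrm{est}} = (1 - \tfrac{4}{3}p)^{3k}$. Then $0 \le \tilde F - F_{\mathrm{est}} < \tfrac{2}{3k}$. -/
lemma bern_aux (p : ℝ) (hp0 : 0 ≤ p) (hp1 : p ≤ 1) :
    ∀ n : ℕ, (1 + n * p) * (1 - p) ^ n ≤ 1 := by
  intro n
  induction n with
  | zero => simp
  | succ n ih =>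
    have h1 : (0:ℝ) ≤ (1 - p) ^ n := pow_nonneg (by linarith) n
    have key : (1 + ((n:ℝ)+1) * p) * (1 - p) ≤ 1 + n * p := by
      nlinarith [mul_nonneg (Nat.cast_nonneg (α := ℝ) n) (sq_nonneg p), sq_nonneg p]
    have : (1 + ((n:ℝ)+1) * p) * (1 - p) ^ (n+1)
        = ((1 + ((n:ℝ)+1) * p) * (1 - p)) * (1 - p) ^ n := by ring
    push_cast
    rw [this]
    calc ((1 + ((n:ℝ)+1) * p) * (1 - p)) * (1 - p) ^ n
        ≤ (1 + n * p) * (1 - p) ^ n := by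
          exact mul_le_mul_of_nonneg_right key h1
      _ ≤ 1 := ih

lemma mvt_aux (A B : ℝ) (hB : 0 ≤ B) (hBA : B ≤ A) :
    ∀ m : ℕ, A ^ (m+1) - B ^ (m+1) ≤ ((m:ℝ)+1) * A ^ m * (A - B) := by
  intro m
  induction m with
  | zero => simp
  | succ m ih =>
    have hA0 : 0 ≤ A := le_trans hB hBA
    have hBAk : B ^ (m+1) ≤ A ^ (m+1) := pow_le_pow_left₀ hB hBA (m+1)
    have hAm : 0 ≤ A ^ m := pow_nonneg hA0 m
    have key : A ^ (m+2) - B ^ (m+2)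
        = A * (A ^ (m+1) - B ^ (m+1)) + (A - B) * B ^ (m+1) := by ring
    have s1 : A * (A ^ (m+1) - B ^ (m+1)) ≤ A * (((m:ℝ)+1) * A ^ m * (A - B)) :=
      mul_le_mul_of_nonneg_left ih hA0
    have s2 : (A - B) * B ^ (m+1) ≤ (A - B) * A ^ (m+1) :=
      mul_le_mul_of_nonneg_left hBAk (sub_nonneg.2 hBA)
    have e1 : A * (((m:ℝ)+1) * A ^ m * (A - B)) = ((m:ℝ)+1) * A ^ (m+1) * (A - B) := by
      rw [pow_succ]; ring
    push_cast
    calc A ^ (m+1+1) - B ^ (m+1+1)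
        = A * (A ^ (m+1) - B ^ (m+1)) + (A - B) * B ^ (m+1) := key
      _ ≤ ((m:ℝ)+1) * A ^ (m+1) * (A - B) + (A - B) * A ^ (m+1) := by
          rw [← e1]; exact add_le_add s1 s2
      _ = ((m:ℝ)+1+1) * A ^ (m+1) * (A - B) := by ring

theorem fidelity_gap_bound (k : ℕ) (hk : 1 ≤ k) (p : ℝ)
    (hp0 : 0 ≤ p) (hp1 : p ≤ 3 / 4) :
    0 ≤ (1 - p) ^ (4 * k) - (1 - 4 / 3 * p) ^ (3 * k) ∧
      (1 - p) ^ (4 * k) - (1 - 4 / 3 * p) ^ (3 * k) < 2 / (3 * k) := by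
  obtain ⟨m, rfl⟩ : ∃ m, k = m + 1 := ⟨k - 1, (Nat.succ_pred_eq_of_pos hk).symm⟩
  set A : ℝ := (1 - p) ^ 4 with hA
  set B : ℝ := (1 - 4 / 3 * p) ^ 3 with hBdef
  have hq0 : (0:ℝ) ≤ 1 - 4/3 * p := by linarith
  have hB : 0 ≤ B := by positivity
  have hBA : B ≤ A := by
    simp only [hA, hBdef]
    nlinarith [sq_nonneg (p * (p - 22/27)), sq_nonneg p]
  have hA0 : 0 ≤ A := le_trans hB hBA
  have hrw1 : (1 - p) ^ (4 * (m+1)) = A ^ (m+1) := by rw [hA, ← pow_mul]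
  have hrw2 : (1 - 4/3*p) ^ (3 * (m+1)) = B ^ (m+1) := by rw [hBdef, ← pow_mul]
  rw [hrw1, hrw2]
  constructor
  · have := pow_le_pow_left₀ hB hBA (m+1)
    linarith
  · have h1 := mvt_aux A B hB hBA m
    have h2 : A - B ≤ 2/3 * p^2 := by
      simp only [hA, hBdef]
      nlinarith [mul_nonneg (pow_nonneg hp0 3) (by linarith : (0:ℝ) ≤ 44/27 - p)]
    have hp' : (0:ℝ) < 1 - p := by linarith
    have hs : (0:ℝ) < (1 - p) ^ (2 * m) := by positivity
    have hAm : A ^ m = ((1 - p) ^ (2*m)) ^ 2 := by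
      rw [hA, ← pow_mul, ← pow_mul]; ring_nf
    set s : ℝ := (1 - p) ^ (2*m) with hsdef
    set K : ℝ := (m:ℝ) + 1 with hK
    have hK1 : 1 ≤ K := by rw [hK]; linarith [Nat.cast_nonneg (α := ℝ) m]
    have hK0 : 0 < K := lt_of_lt_of_le one_pos hK1
    -- t = K * p * s < 1
    have hbern := bern_aux p hp0 (by linarith) (2*m)
    have hcmp : K * p < 1 + (2*m : ℕ) * p := by
      push_cast
      nlinarith [mul_nonneg (Nat.cast_nonneg (α := ℝ) m) hp0]
    have ht1 : K * p * s < 1 := by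
      calc K * p * s < (1 + (2*m : ℕ) * p) * s := by
            exact mul_lt_mul_of_pos_right hcmp hs
        _ ≤ 1 := hbern
    have ht0 : 0 ≤ K * p * s := by positivity
    have ht2 : (K * p * s)^2 < 1 := by nlinarith
    -- chain
    have hAB0 : 0 ≤ A - B := by linarith
    have hchain : A ^ (m+1) - B ^ (m+1) ≤ K * s^2 * (2/3 * p^2) := by
      calc A ^ (m+1) - B ^ (m+1) ≤ K * A ^ m * (A - B) := h1
        _ ≤ K * A ^ m * (2/3 * p^2) := by
            apply mul_le_mul_of_nonneg_left h2
            positivity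
        _ = K * s^2 * (2/3 * p^2) := by rw [hAm]
    have hgoal : A ^ (m+1) - B ^ (m+1) < 2 / (3 * K) := by
      rw [lt_div_iff₀ (by positivity)]
      calc (A ^ (m+1) - B ^ (m+1)) * (3 * K)
          ≤ K * s^2 * (2/3 * p^2) * (3 * K) := by
            apply mul_le_mul_of_nonneg_right hchain
            positivity
        _ = 2 * (K * p * s)^2 := by ring
        _ < 2 := by linarith
    convert hgoal using 2
    push_cast [hK]
    ring
end

section
/- For a natural number $k \geq 1$ and $p \in [0, 3/4]$, the function $k p^2 (-\tfrac{1}{2} p + \tfrac{2}{3})(1-p)^{4(k-1)}$ is at most $\tfrac{2}{3} k p_0^2$ where $p_0 = \frac{16k+1 - \sqrt{256k^2 - 352k + 97}}{6(4k-1)}$ is the maximizer, and moreover $p_0 < 1/k$, so this quantity is strictly less than $\tfrac{2}{3k}$. -/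
open Real

lemma core_amgm (m : ℕ) (p q : ℝ) (hp0 : 0 ≤ p) (hp1 : p ≤ 1) (hq0 : 0 < q) (hq1 : q < 1)
    (hcrit : 3 * ((m : ℝ) + 3) * q ^ 2 - (17 + 4 * m) * q + 8 = 0) :
    p ^ 2 * (4 / 3 - p) * (1 - p) ^ m ≤ q ^ 2 * (4 / 3 - q) * (1 - q) ^ m := by
  set N : ℝ := (m : ℝ) + 3 with hN
  have hNpos : 0 < N := by positivity
  have hq43 : (0:ℝ) < 4 / 3 - q := by linarith
  have h1q : (0:ℝ) < 1 - q := by linarith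
  have hqne : q ≠ 0 := hq0.ne'
  have h43ne : (4/3 - q : ℝ) ≠ 0 := hq43.ne'
  have h1ne : (1 - q : ℝ) ≠ 0 := h1q.ne'
  have hNne : N ≠ 0 := hNpos.ne'
  set z₁ : ℝ := p / q with hz₁
  set z₂ : ℝ := (4 / 3 - p) / (4 / 3 - q) with hz₂
  set z₃ : ℝ := (1 - p) / (1 - q) with hz₃
  have hz₁0 : 0 ≤ z₁ := div_nonneg hp0 hq0.le
  have hz₂0 : 0 ≤ z₂ := div_nonneg (by linarith) hq43.le
  have hz₃0 : 0 ≤ z₃ := div_nonneg (by linarith) h1q.le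
  have hlin : 2 * p * ((4/3 - q) * (1 - q)) + (4/3 - p) * (q * (1 - q))
      + m * ((1 - p) * (q * (4/3 - q))) = N * (q * ((4/3 - q) * (1 - q))) := by
    linear_combination ((p - q) / 3) * hcrit
  have hden : (0:ℝ) < N * (q * ((4/3 - q) * (1 - q))) :=
    mul_pos hNpos (mul_pos hq0 (mul_pos hq43 h1q))
  have hsum : 2 / N * z₁ + 1 / N * z₂ + (m : ℝ) / N * z₃ = 1 := by
    have e1 : 2 / N * z₁ = 2 * p / (N * q) := by rw [hz₁, div_mul_div_comm]
    have e2 : 1 / N * z₂ = (4/3 - p) / (N * (4/3 - q)) := by rw [hz₂, div_mul_div_comm, one_mul]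
    have e3 : (m : ℝ) / N * z₃ = ((m : ℝ) * (1 - p)) / (N * (1 - q)) := by rw [hz₃, div_mul_div_comm]
    rw [e1, e2, e3, div_add_div _ _ (mul_ne_zero hNne hqne) (mul_ne_zero hNne h43ne),
      div_add_div _ _ (mul_ne_zero (mul_ne_zero hNne hqne) (mul_ne_zero hNne h43ne))
        (mul_ne_zero hNne h1ne),
      div_eq_one_iff_eq (by
        exact mul_ne_zero (mul_ne_zero (mul_ne_zero hNne hqne) (mul_ne_zero hNne h43ne))
          (mul_ne_zero hNne h1ne))]
    linear_combination N ^ 2 * hlin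
  have key : z₁ ^ (2 / N) * z₂ ^ (1 / N) * z₃ ^ ((m : ℝ) / N) ≤ 1 := by
    calc z₁ ^ (2 / N) * z₂ ^ (1 / N) * z₃ ^ ((m : ℝ) / N)
        ≤ 2 / N * z₁ + 1 / N * z₂ + (m : ℝ) / N * z₃ :=
          Real.geom_mean_le_arith_mean3_weighted (by positivity) (by positivity)
            (by positivity) hz₁0 hz₂0 hz₃0 (by field_simp; rw [hN]; ring)
      _ = 1 := hsum
  have key2 : z₁ ^ (2 : ℕ) * z₂ * z₃ ^ m ≤ 1 := by
    have h0 : 0 ≤ z₁ ^ (2 / N) * z₂ ^ (1 / N) * z₃ ^ ((m : ℝ) / N) :=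
      mul_nonneg (mul_nonneg (Real.rpow_nonneg hz₁0 _) (Real.rpow_nonneg hz₂0 _))
        (Real.rpow_nonneg hz₃0 _)
    have h := Real.rpow_le_one h0 key (le_of_lt hNpos)
    rw [Real.mul_rpow (mul_nonneg (Real.rpow_nonneg hz₁0 _) (Real.rpow_nonneg hz₂0 _))
        (Real.rpow_nonneg hz₃0 _),
      Real.mul_rpow (Real.rpow_nonneg hz₁0 _) (Real.rpow_nonneg hz₂0 _),
      ← Real.rpow_mul hz₁0, ← Real.rpow_mul hz₂0, ← Real.rpow_mul hz₃0,
      div_mul_cancel₀ _ hNne, div_mul_cancel₀ _ hNne, div_mul_cancel₀ _ hNne,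
      show (2:ℝ) = ((2:ℕ):ℝ) by norm_num, Real.rpow_natCast, Real.rpow_one,
      Real.rpow_natCast] at h
    exact h
  have hpos : 0 < q ^ 2 * (4 / 3 - q) * (1 - q) ^ m :=
    mul_pos (mul_pos (by positivity) hq43) (pow_pos h1q m)
  rw [← div_le_one hpos]
  calc p ^ 2 * (4 / 3 - p) * (1 - p) ^ m / (q ^ 2 * (4 / 3 - q) * (1 - q) ^ m)
      = z₁ ^ (2:ℕ) * z₂ * z₃ ^ m := by
        rw [hz₁, hz₂, hz₃, div_pow, div_pow]
        field_simp
    _ ≤ 1 := key2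

set_option maxHeartbeats 1600000 in
theorem max_bound (k : ℕ) (hk : 1 ≤ k) (p : ℝ) (hp0 : 0 ≤ p) (hp1 : p ≤ 3 / 4)
    (p₀ : ℝ)
    (hp₀ : p₀ = (16 * k + 1 - Real.sqrt (256 * k ^ 2 - 352 * k + 97))
      / (6 * (4 * k - 1))) :
    (k : ℝ) * p ^ 2 * (-(1 / 2) * p + 2 / 3) * (1 - p) ^ (4 * (k - 1))
        ≤ 2 / 3 * k * p₀ ^ 2 ∧
      p₀ < 1 / k ∧
      (k : ℝ) * p ^ 2 * (-(1 / 2) * p + 2 / 3) * (1 - p) ^ (4 * (k - 1))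
        < 2 / (3 * k) := by
  have hkR : (1 : ℝ) ≤ (k : ℝ) := Nat.one_le_cast.mpr hk
  have hD : (0 : ℝ) ≤ 256 * (k : ℝ) ^ 2 - 352 * (k : ℝ) + 97 := by
    nlinarith [sq_nonneg ((k : ℝ) - 1)]
  obtain ⟨s, hsdef⟩ : ∃ s : ℝ, s = Real.sqrt (256 * (k : ℝ) ^ 2 - 352 * (k : ℝ) + 97) :=
    ⟨_, rfl⟩
  rw [← hsdef] at hp₀
  have hs0 : 0 ≤ s := hsdef ▸ Real.sqrt_nonneg _
  have hs2 : s ^ 2 = 256 * (k : ℝ) ^ 2 - 352 * (k : ℝ) + 97 := by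
    rw [hsdef]; exact Real.sq_sqrt hD
  have hA : (0 : ℝ) < 4 * (k : ℝ) - 1 := by linarith
  have hkpos : (0 : ℝ) < (k : ℝ) := by linarith
  have h6 : 6 * (4 * (k : ℝ) - 1) * p₀ = 16 * (k : ℝ) + 1 - s := by
    rw [hp₀]; field_simp
  have h12 : (12 * (4 * (k : ℝ) - 1)) * (3 * (4 * (k : ℝ) - 1) * p₀ ^ 2
      - (16 * (k : ℝ) + 1) * p₀ + 8) = 0 := by
    linear_combination (6 * (4 * (k : ℝ) - 1) * p₀ - (16 * (k : ℝ) + 1) - s) * h6 + hs2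
  have hquad : 3 * (4 * (k : ℝ) - 1) * p₀ ^ 2 - (16 * (k : ℝ) + 1) * p₀ + 8 = 0 := by
    rcases mul_eq_zero.1 h12 with h | h
    · exfalso; nlinarith
    · exact h
  have hsltB : s < 16 * (k : ℝ) + 1 := by nlinarith
  have hq0 : 0 < p₀ := by
    rw [hp₀]
    exact div_pos (by linarith) (by linarith)
  have hqk : p₀ < 1 / (k : ℝ) := by
    rcases Nat.lt_or_ge k 2 with h2 | h2
    · interval_cases k
      have hs1 : s = 1 := by
        rw [hsdef]; norm_num
      rw [hp₀, hs1]
      norm_num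
    · have hk2 : (2 : ℝ) ≤ (k : ℝ) := by exact_mod_cast h2
      rw [hp₀, div_lt_div_iff₀ (by linarith) hkpos]
      nlinarith [hs2, hs0, mul_nonneg hkpos.le hs0,
        mul_nonneg (mul_nonneg hkpos.le hkpos.le) hs0]
  have hq1 : p₀ < 1 := lt_of_lt_of_le hqk (by rw [div_le_one hkpos]; exact hkR)
  have hm : ((4 * (k - 1) : ℕ) : ℝ) = 4 * (k : ℝ) - 4 := by
    have h : ((k - 1 : ℕ) : ℝ) = (k : ℝ) - 1 := by
      rw [Nat.cast_sub hk]; norm_num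
    push_cast [h]; ring
  have hcrit : 3 * (((4 * (k - 1) : ℕ) : ℝ) + 3) * p₀ ^ 2
      - (17 + 4 * ((4 * (k - 1) : ℕ) : ℝ)) * p₀ + 8 = 0 := by
    rw [hm]; linear_combination hquad
  have hcore := core_amgm (4 * (k - 1)) p p₀ hp0 (by linarith) hq0 hq1 hcrit
  have hpow1 : (1 - p₀) ^ (4 * (k - 1)) ≤ 1 :=
    pow_le_one₀ (by linarith) (by linarith)
  have hq430 : (0 : ℝ) ≤ 4 / 3 - p₀ := by linarith
  have hX2 : p₀ ^ 2 * (4 / 3 - p₀) * (1 - p₀) ^ (4 * (k - 1)) ≤ 4 / 3 * p₀ ^ 2 := by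
    calc p₀ ^ 2 * (4 / 3 - p₀) * (1 - p₀) ^ (4 * (k - 1))
        ≤ p₀ ^ 2 * (4 / 3 - p₀) * 1 :=
          mul_le_mul_of_nonneg_left hpow1 (mul_nonneg (sq_nonneg _) hq430)
      _ ≤ 4 / 3 * p₀ ^ 2 := by nlinarith [sq_nonneg p₀]
  have hX : p ^ 2 * (4 / 3 - p) * (1 - p) ^ (4 * (k - 1)) ≤ 4 / 3 * p₀ ^ 2 :=
    le_trans hcore hX2
  have hLHS : (k : ℝ) * p ^ 2 * (-(1 / 2) * p + 2 / 3) * (1 - p) ^ (4 * (k - 1))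
      = (k : ℝ) / 2 * (p ^ 2 * (4 / 3 - p) * (1 - p) ^ (4 * (k - 1))) := by ring
  have goal1 : (k : ℝ) * p ^ 2 * (-(1 / 2) * p + 2 / 3) * (1 - p) ^ (4 * (k - 1))
      ≤ 2 / 3 * (k : ℝ) * p₀ ^ 2 := by
    rw [hLHS]
    calc (k : ℝ) / 2 * (p ^ 2 * (4 / 3 - p) * (1 - p) ^ (4 * (k - 1)))
        ≤ (k : ℝ) / 2 * (4 / 3 * p₀ ^ 2) := mul_le_mul_of_nonneg_left hX (by positivity)
      _ = 2 / 3 * (k : ℝ) * p₀ ^ 2 := by ring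
  have goal2lt : 2 / 3 * (k : ℝ) * p₀ ^ 2 < 2 / (3 * (k : ℝ)) := by
    have hsq : p₀ ^ 2 < (1 / (k : ℝ)) ^ 2 := by nlinarith
    have h1 : 2 / 3 * (k : ℝ) * p₀ ^ 2 < 2 / 3 * (k : ℝ) * (1 / (k : ℝ)) ^ 2 :=
      mul_lt_mul_of_pos_left hsq (by positivity)
    have h2 : 2 / 3 * (k : ℝ) * (1 / (k : ℝ)) ^ 2 = 2 / (3 * (k : ℝ)) := by
      field_simp
    linarith
  exact ⟨goal1, hqk, lt_of_le_of_lt goal1 goal2lt⟩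
end

section
/- Let $n \geq 1$ and $p \in [0,1]$. Then $(1-p)^n + \sum_{k=1}^{\lfloor n/2 \rfloor} \binom{n}{2k} (1-p)^{n-2k}(p/3)^{2k} + 2^{n-1}(p/3)^n = \tfrac{1}{2}\left[(1-\tfrac{2}{3}p)^n + (\tfrac{2}{3}p)^n + (1-\tfrac{4}{3}p)^n\right]$. -/
lemma even_binom_sum (a b : ℝ) (n : ℕ) :
    (a + b) ^ n + (a - b) ^ n
      = 2 * ∑ j ∈ Finset.range (n / 2 + 1),
          (n.choose (2 * j) : ℝ) * a ^ (n - 2 * j) * b ^ (2 * j) := by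
  have h1 : (a + b) ^ n = ∑ k ∈ Finset.range (n + 1),
      b ^ k * a ^ (n - k) * (n.choose k : ℝ) := by
    rw [add_comm a b, add_pow]
  have h2 : (a - b) ^ n = ∑ k ∈ Finset.range (n + 1),
      (-b) ^ k * a ^ (n - k) * (n.choose k : ℝ) := by
    rw [sub_eq_add_neg, add_comm a (-b), add_pow]
  rw [h1, h2, ← Finset.sum_add_distrib]
  have key : ∀ k ∈ Finset.range (n + 1),
      b ^ k * a ^ (n - k) * (n.choose k : ℝ)
        + (-b) ^ k * a ^ (n - k) * (n.choose k : ℝ)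
      = if Even k then 2 * ((n.choose k : ℝ) * a ^ (n - k) * b ^ k) else 0 := by
    intro k _
    by_cases hk : Even k
    · rw [if_pos hk, hk.neg_pow]; ring
    · rw [if_neg hk, (Nat.not_even_iff_odd.mp hk).neg_pow]; ring
  rw [Finset.sum_congr rfl key, ← Finset.sum_filter, Finset.mul_sum]
  refine Finset.sum_bij' (fun k _ => k / 2) (fun j _ => 2 * j) ?_ ?_ ?_ ?_ ?_
  · intro k hk
    simp only [Finset.mem_filter, Finset.mem_range] at hk
    simp only [Finset.mem_range]
    omega
  · intro j hj
    simp only [Finset.mem_range] at hj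
    simp only [Finset.mem_filter, Finset.mem_range]
    exact ⟨by omega, even_two_mul j⟩
  · intro k hk
    simp only [Finset.mem_filter, Finset.mem_range] at hk
    obtain ⟨-, m, hm⟩ := hk
    omega
  · intro j hj
    omega
  · intro k hk
    simp only [Finset.mem_filter, Finset.mem_range] at hk
    obtain ⟨-, m, hm⟩ := hk
    have h2k : 2 * (k / 2) = k := by omega
    simp only [h2k]

theorem fully_connected_fidelity_two_forms (n : ℕ) (hn : 1 ≤ n) (p : ℝ)
    (hp0 : 0 ≤ p) (hp1 : p ≤ 1) :
    (1 - p) ^ n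
        + (∑ k ∈ Finset.Icc 1 (n / 2),
            (n.choose (2 * k) : ℝ) * (1 - p) ^ (n - 2 * k) * (p / 3) ^ (2 * k))
        + 2 ^ (n - 1) * (p / 3) ^ n
      = (1 / 2) * ((1 - 2 / 3 * p) ^ n + (2 / 3 * p) ^ n
          + (1 - 4 / 3 * p) ^ n) := by
  have hrange : Finset.range (n / 2 + 1) = insert 0 (Finset.Icc 1 (n / 2)) := by
    ext x
    simp only [Finset.mem_range, Finset.mem_insert, Finset.mem_Icc]
    omega
  have hkey := even_binom_sum (1 - p) (p / 3) n
  rw [hrange, Finset.sum_insert (by simp)] at hkey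
  simp only [Nat.mul_zero, Nat.choose_zero_right, Nat.cast_one, pow_zero, Nat.sub_zero,
    one_mul, mul_one] at hkey
  have h1 : (1 - p) + p / 3 = 1 - 2 / 3 * p := by ring
  have h2 : (1 - p) - p / 3 = 1 - 4 / 3 * p := by ring
  rw [h1, h2] at hkey
  have h3 : (2 / 3 * p) ^ n = 2 ^ n * (p / 3) ^ n := by
    rw [← mul_pow]; ring_nf
  have h4 : (2 : ℝ) ^ n = 2 * 2 ^ (n - 1) := by
    rw [← pow_succ']
    congr 1
    omega
  rw [h3, h4]
  linarith [hkey]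
end

section
/- For a natural number $n \geq 2$ and real $p \in [0, 3/4]$, with $s = 1-p$, $t = 1 - \tfrac{2}{3}p$, $u = 1 - \tfrac{4}{3}p$, one has $(t^n - s^n) - (s^n - u^n) \le \frac{n(n-1)}{9} p^2 \left(1 - \tfrac{2}{3}p\right)^{n-2}$. -/
private lemma pow_sub_pow_le_aux (a b : ℝ) (hb : 0 ≤ b) (hba : b ≤ a) :
    ∀ m : ℕ, a ^ (m + 1) - b ^ (m + 1) ≤ ((m : ℝ) + 1) * a ^ m * (a - b) := by
  intro m
  induction m with
  | zero => simp
  | succ m ih =>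
    have ha : 0 ≤ a := hb.trans hba
    have h1 : a ^ (m + 2) - b ^ (m + 2)
        = a * (a ^ (m + 1) - b ^ (m + 1)) + (a - b) * b ^ (m + 1) := by ring
    have h2 : a * (a ^ (m + 1) - b ^ (m + 1)) ≤ a * (((m : ℝ) + 1) * a ^ m * (a - b)) :=
      mul_le_mul_of_nonneg_left ih ha
    have h3 : (a - b) * b ^ (m + 1) ≤ (a - b) * a ^ (m + 1) :=
      mul_le_mul_of_nonneg_left (pow_le_pow_left₀ hb hba _) (by linarith)
    have h4 : a * (((m : ℝ) + 1) * a ^ m * (a - b)) = ((m : ℝ) + 1) * a ^ (m + 1) * (a - b) := by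
      ring
    push_cast
    nlinarith [h1, h2, h3, h4]

private lemma key_aux (s h : ℝ) (hh : 0 ≤ h) (hu : 0 ≤ s - h) :
    ∀ m : ℕ, (s + h) ^ (m + 2) + (s - h) ^ (m + 2) - 2 * s ^ (m + 2)
      ≤ ((m : ℝ) + 2) * ((m : ℝ) + 1) * h ^ 2 * (s + h) ^ m := by
  intro m
  induction m with
  | zero => simp; nlinarith
  | succ m ih =>
    have hs : 0 ≤ s := by linarith
    have ht : 0 ≤ s + h := by linarith
    set t := s + h with htdef
    set u := s - h with hudef
    have h1 : t ^ (m + 3) + u ^ (m + 3) - 2 * s ^ (m + 3)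
        = t * (t ^ (m + 2) + u ^ (m + 2) - 2 * s ^ (m + 2))
          + 2 * h * (s ^ (m + 2) - u ^ (m + 2)) := by
      have : u - t = -2 * h := by rw [hudef, htdef]; ring
      rw [htdef, hudef]; ring
    have h2 : t * (t ^ (m + 2) + u ^ (m + 2) - 2 * s ^ (m + 2))
        ≤ t * (((m : ℝ) + 2) * ((m : ℝ) + 1) * h ^ 2 * t ^ m) :=
      mul_le_mul_of_nonneg_left ih ht
    have h3 : s ^ (m + 2) - u ^ (m + 2) ≤ ((m : ℝ) + 2) * s ^ (m + 1) * (s - u) := by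
      have := pow_sub_pow_le_aux s u hu (by rw [hudef]; linarith) (m + 1)
      push_cast at this ⊢
      linarith
    have hsu : s - u = h := by rw [hudef]; ring
    have h4 : s ^ (m + 1) ≤ t ^ (m + 1) := pow_le_pow_left₀ hs (by rw [htdef]; linarith) _
    have h5 : 2 * h * (s ^ (m + 2) - u ^ (m + 2)) ≤ 2 * h * (((m : ℝ) + 2) * t ^ (m + 1) * h) := by
      rw [hsu] at h3
      have hc : (0:ℝ) ≤ (m : ℝ) + 2 := by positivity
      have : ((m : ℝ) + 2) * s ^ (m + 1) * h ≤ ((m : ℝ) + 2) * t ^ (m + 1) * h :=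
        mul_le_mul_of_nonneg_right (mul_le_mul_of_nonneg_left h4 hc) hh
      nlinarith
    have h6 : t * (((m : ℝ) + 2) * ((m : ℝ) + 1) * h ^ 2 * t ^ m)
          + 2 * h * (((m : ℝ) + 2) * t ^ (m + 1) * h)
        = ((m : ℝ) + 3) * ((m : ℝ) + 2) * h ^ 2 * t ^ (m + 1) := by
      ring
    push_cast
    calc t ^ (m + 1 + 2) + u ^ (m + 1 + 2) - 2 * s ^ (m + 1 + 2)
        = t * (t ^ (m + 2) + u ^ (m + 2) - 2 * s ^ (m + 2))
          + 2 * h * (s ^ (m + 2) - u ^ (m + 2)) := by rw [show m + 1 + 2 = m + 3 from rfl]; exact h1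
      _ ≤ t * (((m : ℝ) + 2) * ((m : ℝ) + 1) * h ^ 2 * t ^ m)
          + 2 * h * (((m : ℝ) + 2) * t ^ (m + 1) * h) := by linarith
      _ = ((m : ℝ) + 3) * ((m : ℝ) + 2) * h ^ 2 * t ^ (m + 1) := h6
      _ = ((m : ℝ) + 1 + 2) * ((m : ℝ) + 1 + 1) * h ^ 2 * t ^ (m + 1) := by ring

theorem appendixD_key_inequality (n : ℕ) (hn : 2 ≤ n) (p : ℝ)
    (hp0 : 0 ≤ p) (hp1 : p ≤ 3 / 4) :
    ((1 - 2 / 3 * p) ^ n - (1 - p) ^ n) - ((1 - p) ^ n - (1 - 4 / 3 * p) ^ n)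
      ≤ (n : ℝ) * ((n : ℝ) - 1) / 9 * p ^ 2 * (1 - 2 / 3 * p) ^ (n - 2) := by
  obtain ⟨m, rfl⟩ : ∃ m, n = m + 2 := ⟨n - 2, by omega⟩
  have key := key_aux (1 - p) (p / 3) (by linarith) (by linarith) m
  have e1 : (1 - p) + p / 3 = 1 - 2 / 3 * p := by ring
  have e2 : (1 - p) - p / 3 = 1 - 4 / 3 * p := by ring
  rw [e1, e2] at key
  have e3 : (m + 2 : ℕ) - 2 = m := by omega
  rw [e3]
  push_cast
  have e4 : ((m : ℝ) + 2) * ((m : ℝ) + 1) * (p / 3) ^ 2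
      = ((m : ℝ) + 2) * ((m : ℝ) + 2 - 1) / 9 * p ^ 2 := by ring
  nlinarith [key]
end

section
/- For integers $n \geq 2$, $1 \le i \le n$, and reals $u \le s \le t$ with $t - s = s - u \geq 0$ and $u \geq 0$, one has $(t^{n-1} - t^{n-i} s^{i-1}) - (s^{n-1} - s^{n-i} u^{i-1}) \geq 0$. -/
lemma aux_convex (k : ℕ) (u s t : ℝ) (hu : 0 ≤ u) (hus : u ≤ s) (hst : s ≤ t)
    (harith : t - s = s - u) :
    s ^ k - u ^ k ≤ t ^ k - s ^ k := by
  have hs : 0 ≤ s := hu.trans hus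
  rw [← geom_sum₂_mul, ← geom_sum₂_mul, harith]
  apply mul_le_mul_of_nonneg_right _ (by linarith [harith])
  apply Finset.sum_le_sum
  intro j _
  exact mul_le_mul (pow_le_pow_left₀ hs hst j) (pow_le_pow_left₀ hu hus _)
    (pow_nonneg hu _) (pow_nonneg (hs.trans hst) _)

theorem summand_domination (n i : ℕ) (hn : 2 ≤ n) (hi1 : 1 ≤ i) (hin : i ≤ n)
    (u s t : ℝ) (hus : u ≤ s) (hst : s ≤ t) (harith : t - s = s - u)
    (hgap : 0 ≤ t - s) (hu : 0 ≤ u) :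
    0 ≤ (t ^ (n - 1) - t ^ (n - i) * s ^ (i - 1))
      - (s ^ (n - 1) - s ^ (n - i) * u ^ (i - 1)) := by
  have hs : 0 ≤ s := hu.trans hus
  have hsplit : n - 1 = (n - i) + (i - 1) := by omega
  rw [hsplit, pow_add, pow_add]
  have h1 : s ^ (i - 1) - u ^ (i - 1) ≤ t ^ (i - 1) - s ^ (i - 1) :=
    aux_convex _ u s t hu hus hst harith
  have h2 : 0 ≤ s ^ (i - 1) - u ^ (i - 1) :=
    sub_nonneg.2 (pow_le_pow_left₀ hu hus _)
  have h3 : s ^ (n - i) ≤ t ^ (n - i) := pow_le_pow_left₀ hs hst _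
  nlinarith [mul_le_mul h3 h1 h2 (pow_nonneg (hs.trans hst) (n - i)),
    pow_nonneg hs (n - i)]
end

section
/- Let $k \geq 1$, $n = 8k$, and $p \in [0, 3/4]$. Define $F = \tfrac{1}{2}\left[(1 - \tfrac{2}{3}p)^n + (\tfrac{2}{3}p)^n + (1 - \tfrac{4}{3}p)^n\right]$ and $F_{\mathrm{est}} = (1 - \tfrac{4}{3}p)^{6k}$. Then $0 \le F - F_{\mathrm{est}} < \tfrac{1}{2}\left(1 - \tfrac{1}{8k}\right)\left(1 - \tfrac{1}{4k}\right)^{8k-2} + \tfrac{1}{2}\left(\tfrac{2}{3}\right)^{8k} + \tfrac{1}{3k}$. -/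
lemma geo_bound (d : ℝ) (hd0 : 0 ≤ d) (hd1 : d ≤ 1) :
    ∀ j : ℕ, ((j : ℝ) + 1) * (1 - d) * d ^ j ≤ 1 - d ^ (j + 1) := by
  intro j
  induction j with
  | zero => simp
  | succ n ih =>
    have hp : 0 ≤ d ^ n := pow_nonneg hd0 n
    have hdn : d ^ n * d ≤ 1 := by
      have := pow_le_one₀ hd0 hd1 (n := n + 1)
      rwa [pow_succ] at this
    rw [pow_succ] at ih
    rw [pow_succ, pow_succ, pow_succ]
    push_cast
    nlinarith [mul_le_mul_of_nonneg_left ih hd0,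
      mul_nonneg (show (0:ℝ) ≤ 1 - d by linarith) (show (0:ℝ) ≤ 1 - d^n*d by linarith)]

lemma sub_pow_bound (A B : ℝ) (hB : 0 ≤ B) (hBA : B ≤ A) :
    ∀ n : ℕ, A ^ (n+1) - ((n : ℝ) + 1) * B * A ^ n ≤ (A - B) ^ (n+1) := by
  have hA : 0 ≤ A := hB.trans hBA
  intro n
  induction n with
  | zero => simp
  | succ n ih =>
    have h1 : (A - B) ^ (n+1) ≤ A ^ (n+1) :=
      pow_le_pow_left₀ (by linarith) (by linarith) _
    have h2 := mul_le_mul_of_nonneg_left ih hA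
    have h3 := mul_le_mul_of_nonneg_left h1 hB
    rw [pow_succ (A-B), pow_succ A (n+1), pow_succ A n]
    rw [pow_succ A n] at h2 h3 ih
    push_cast
    nlinarith [pow_nonneg hA n, pow_nonneg (show (0:ℝ) ≤ A - B by linarith) (n+1)]

lemma peak_bound (u : ℝ) (h0 : 0 ≤ u) (h1 : u ≤ 1) :
    (1:ℝ)/2*u^4 + 1/2*u^8 - u^6 ≤ 1/32 := by
  have hs0 : 0 ≤ u^2 := sq_nonneg u
  have hs1 : u^2 ≤ 1 := pow_le_one₀ h0 h1
  have hx : 0 ≤ u^2*(1-u^2) := mul_nonneg hs0 (by linarith)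
  have hx4 : u^2*(1-u^2) ≤ 1/4 := by nlinarith [sq_nonneg (u^2-1/2)]
  have hsq : (u^2*(1-u^2))^2 ≤ 1/16 := by nlinarith [hx, hx4]
  have hid : (1:ℝ)/2*u^4+1/2*u^8-u^6 = 1/2*(u^2*(1-u^2))^2 := by ring
  linarith

set_option maxHeartbeats 2000000 in
theorem fully_connected_gap_bound (k : ℕ) (hk : 1 ≤ k) (p : ℝ)
    (hp0 : 0 ≤ p) (hp1 : p ≤ 3 / 4) :
    0 ≤ (1 / 2) * ((1 - 2 / 3 * p) ^ (8 * k) + (2 / 3 * p) ^ (8 * k)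
          + (1 - 4 / 3 * p) ^ (8 * k)) - (1 - 4 / 3 * p) ^ (6 * k) ∧
      (1 / 2) * ((1 - 2 / 3 * p) ^ (8 * k) + (2 / 3 * p) ^ (8 * k)
          + (1 - 4 / 3 * p) ^ (8 * k)) - (1 - 4 / 3 * p) ^ (6 * k)
        < (1 / 2) * (1 - 1 / (8 * (k : ℝ))) * (1 - 1 / (4 * (k : ℝ))) ^ (8 * k - 2)
          + (1 / 2) * (2 / 3) ^ (8 * k) + 1 / (3 * (k : ℝ)) := by
  obtain ⟨m, rfl⟩ : ∃ m, k = m + 1 := ⟨k - 1, by omega⟩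
  set a : ℝ := 1 - 2 / 3 * p with ha_def
  set q : ℝ := 2 / 3 * p with hq_def
  set b : ℝ := 1 - 4 / 3 * p with hb_def
  have ha0 : (0:ℝ) ≤ a := by rw [ha_def, hq_def]; linarith
  have ha1 : a ≤ 1 := by rw [ha_def, hq_def]; linarith
  have hq0 : (0:ℝ) ≤ q := by rw [hq_def]; linarith
  have hqh : q ≤ 1/2 := by rw [hq_def]; linarith
  have hb0 : (0:ℝ) ≤ b := by rw [hb_def]; linarith
  have hb1 : b ≤ 1 := by rw [hb_def]; linarith
  have hba : b ≤ a^2 := by rw [hb_def, ha_def, hq_def]; nlinarith [sq_nonneg p]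
  have hbA : b = a^2 - (1-a)^2 := by rw [hb_def, ha_def, hq_def]; ring
  clear_value a q b
  clear ha_def hq_def hb_def hp0 hp1
  have hm0 : (0:ℝ) ≤ (m:ℝ) := Nat.cast_nonneg m
  constructor
  · -- lower bound
    have hA4 : b^(4*(m+1)) ≤ a^(8*(m+1)) := by
      calc b^(4*(m+1)) ≤ (a^2)^(4*(m+1)) := pow_le_pow_left₀ hb0 hba _
        _ = a^(8*(m+1)) := by ring
    have key : b^(6*(m+1)) * b^(6*(m+1)) ≤ a^(8*(m+1)) * b^(8*(m+1)) := by
      have hid : b^(6*(m+1)) * b^(6*(m+1)) = b^(4*(m+1)) * b^(8*(m+1)) := by ring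
      rw [hid]
      exact mul_le_mul_of_nonneg_right hA4 (pow_nonneg hb0 _)
    have hA0 : 0 ≤ a^(8*(m+1)) := pow_nonneg ha0 _
    have hB0 : 0 ≤ b^(8*(m+1)) := pow_nonneg hb0 _
    have hC0 : 0 ≤ b^(6*(m+1)) := pow_nonneg hb0 _
    have hQ0 : 0 ≤ q^(8*(m+1)) := pow_nonneg hq0 _
    have hAB : 2 * b^(6*(m+1)) ≤ a^(8*(m+1)) + b^(8*(m+1)) := by
      nlinarith [key, sq_nonneg (a^(8*(m+1)) - b^(8*(m+1))), hA0, hB0, hC0]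
    linarith
  · -- upper bound
    set u : ℝ := a^(2*(m+1)) with hu_def
    have hu0 : 0 ≤ u := pow_nonneg ha0 _
    have hu1 : u ≤ 1 := pow_le_one₀ ha0 ha1
    have hb8 : b ^ (8*(m+1)) ≤ u ^ 8 := by
      calc b ^ (8*(m+1)) ≤ (a^2) ^ (8*(m+1)) := pow_le_pow_left₀ hb0 hba _
        _ = u^8 := by rw [hu_def]; ring
    set ε : ℝ := (2*(m:ℝ) + 2) * (1-a)^2 * (a^2)^(2*m+1) with he_def
    have hε0 : 0 ≤ ε := by positivity
    have hr : u^2 - ε ≤ b ^ (2*(m+1)) := by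
      have h := sub_pow_bound (a^2) ((1-a)^2) (sq_nonneg _) (by nlinarith) (2*m+1)
      rw [← hbA] at h
      have he : (2*m+1+1) = 2*(m+1) := by omega
      rw [he] at h
      have hid : (a^2)^(2*(m+1)) = u^2 := by rw [hu_def]; ring
      rw [hid] at h
      push_cast at h
      rw [he_def]
      push_cast
      linarith
    have hr0 : 0 ≤ b ^ (2*(m+1)) := pow_nonneg hb0 _
    have hcube : u^6 - 3*ε*u^4 ≤ b^(6*(m+1)) := by
      have hb6 : b^(6*(m+1)) = (b^(2*(m+1)))^3 := by ring
      rw [hb6]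
      rcases le_or_gt (u^2) ε with h | h
      · nlinarith [pow_nonneg hu0 4, pow_nonneg hu0 6, pow_nonneg hr0 3,
          mul_le_mul_of_nonneg_right h (pow_nonneg hu0 4)]
      · have h1 : (0:ℝ) ≤ u^2 - ε := by linarith
        have h3 : (u^2-ε)^3 ≤ (b^(2*(m+1)))^3 := pow_le_pow_left₀ h1 hr 3
        nlinarith [h3, sq_nonneg ε, hε0, sq_nonneg u,
          mul_nonneg (mul_nonneg hε0 hε0) (sq_nonneg u)]
    -- error term bound
    have hgeo := geo_bound a ha0 ha1 (6*m+5)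
    have hw0 : 0 ≤ (1-a) * a^(6*m+5) := mul_nonneg (by linarith) (pow_nonneg ha0 _)
    have h6pos : (0:ℝ) < 6*((m:ℝ)+1) := by positivity
    have hw1 : (6*((m:ℝ)+1)) * ((1-a) * a^(6*m+5)) ≤ 1 := by
      have hpn : 0 ≤ a ^ (6*m+5) * a := mul_nonneg (pow_nonneg ha0 _) ha0
      rw [pow_succ a (6*m+5)] at hgeo
      push_cast at hgeo
      have hid : (6*((m:ℝ)+1)) * ((1-a) * a^(6*m+5))
          = (6*(m:ℝ)+5+1) * (1-a) * a^(6*m+5) := by ring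
      rw [hid]
      linarith [hgeo, hpn]
    have hεu : 3*ε*u^4 = (6*((m:ℝ)+1)) * ((1-a) * a^(6*m+5))^2 := by
      rw [he_def, hu_def]; ring
    have herr : 3*ε*u^4 ≤ 1/(6*((m:ℝ)+1)) := by
      rw [hεu]
      have hwle : (1-a) * a^(6*m+5) ≤ 1/(6*((m:ℝ)+1)) := by
        rw [le_div_iff₀ h6pos]; linarith [hw1]
      have h1 := mul_le_mul_of_nonneg_right hw1 hw0
      calc (6*((m:ℝ)+1)) * ((1-a) * a^(6*m+5))^2
          = ((6*((m:ℝ)+1)) * ((1-a) * a^(6*m+5))) * ((1-a) * a^(6*m+5)) := by ring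
        _ ≤ 1 * ((1-a) * a^(6*m+5)) := h1
        _ = (1-a) * a^(6*m+5) := one_mul _
        _ ≤ 1/(6*((m:ℝ)+1)) := hwle
    clear_value u ε
    -- peak bound
    have hHu : (1:ℝ)/2*u^4 + 1/2*u^8 - u^6 ≤ 1/32 := peak_bound u hu0 hu1
    have haN : a^(8*(m+1)) = u^4 := by rw [hu_def]; ring
    have hH : 1/2*a^(8*(m+1)) + 1/2*b^(8*(m+1)) - b^(6*(m+1))
        ≤ 1/32 + 1/(6*((m:ℝ)+1)) := by
      rw [haN]; linarith [hb8, hcube, herr, hHu]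
    -- RHS1 ≥ 1/32
    have hc4 : (0:ℝ) < 4*(m:ℝ)+3 := by positivity
    have hexpc : Real.exp (-(1/(4*(m:ℝ)+3))) ≤ 1 - 1/(4*((m:ℝ)+1)) := by
      have h := Real.add_one_le_exp (1/(4*(m:ℝ)+3))
      rw [Real.exp_neg]
      have hgt : (4*(m:ℝ)+4)/(4*(m:ℝ)+3) ≤ Real.exp (1/(4*(m:ℝ)+3)) := by
        have hid : (4*(m:ℝ)+4)/(4*(m:ℝ)+3) = 1/(4*(m:ℝ)+3) + 1 := by
          field_simp
          ring
        rw [hid]; exact h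
      have hratpos : (0:ℝ) < (4*(m:ℝ)+4)/(4*(m:ℝ)+3) := by positivity
      have hinv := inv_anti₀ hratpos hgt
      have hid2 : ((4*(m:ℝ)+4)/(4*(m:ℝ)+3))⁻¹ = 1 - 1/(4*((m:ℝ)+1)) := by
        rw [inv_div]; field_simp; ring
      rw [hid2] at hinv
      exact hinv
    have hpowE : Real.exp (-2) ≤ (1 - 1/(4*((m:ℝ)+1)))^(8*m+6) := by
      have h0 : 0 ≤ Real.exp (-(1/(4*(m:ℝ)+3))) := (Real.exp_pos _).le
      calc Real.exp (-2) = Real.exp (-(1/(4*(m:ℝ)+3))) ^ (8*m+6) := by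
            rw [← Real.exp_nat_mul]
            congr 1
            push_cast
            field_simp
            ring
        _ ≤ _ := pow_le_pow_left₀ h0 hexpc _
    have hE : (1:ℝ)/14 ≤ Real.exp (-2) := by
      have h1 : Real.exp 1 < 2.7182818286 := Real.exp_one_lt_d9
      have h2 : Real.exp 2 = Real.exp 1 * Real.exp 1 := by
        rw [← Real.exp_add]; norm_num
      have h3 : Real.exp 2 ≤ 14 := by nlinarith [Real.exp_pos 1, (Real.exp_pos 1).le]
      have h4 := Real.exp_pos 2
      rw [show ((-2:ℝ)) = -(2:ℝ) by norm_num, Real.exp_neg,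
        show (1:ℝ)/14 = (14:ℝ)⁻¹ by norm_num]
      exact inv_anti₀ h4 h3
    have hRHS1 : (1:ℝ)/32 ≤ 1/2*(1 - 1/(8*((m:ℝ)+1)))*(1 - 1/(4*((m:ℝ)+1)))^(8*m+6) := by
      have hf1 : (7:ℝ)/8 ≤ 1 - 1/(8*((m:ℝ)+1)) := by
        have h8 : (0:ℝ) < 8*((m:ℝ)+1) := by positivity
        have : 1/(8*((m:ℝ)+1)) ≤ 1/8 := by
          rw [div_le_div_iff₀ h8 (by norm_num)]; linarith
        linarith
      have hfp : (1:ℝ)/14 ≤ (1 - 1/(4*((m:ℝ)+1)))^(8*m+6) := hE.trans hpowE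
      nlinarith [mul_le_mul hf1 hfp (by norm_num) (by linarith)]
    -- assemble
    have hqN : q^(8*(m+1)) ≤ (1/2:ℝ)^(8*(m+1)) := pow_le_pow_left₀ hq0 hqh _
    have hhalf : ((1:ℝ)/2)^(8*(m+1)) < ((2:ℝ)/3)^(8*(m+1)) :=
      pow_lt_pow_left₀ (by norm_num) (by norm_num) (by omega)
    have hk6 : 1/(6*((m:ℝ)+1)) < 1/(3*((m:ℝ)+1)) := by
      rw [div_lt_div_iff₀ h6pos (by positivity)]; nlinarith
    have h82 : 8*(m+1)-2 = 8*m+6 := by omega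
    rw [h82]
    push_cast
    linarith [hH, hRHS1, hqN, hhalf, hk6]
end

section
/- For $p \in [0,1]$ and natural $n \geq 1$, with $s = 1-p$, $t = 1 - \tfrac{2}{3}p$, $u = 1 - \tfrac{4}{3}p$: $\tfrac{1}{2}(t^n + (\tfrac{2}{3}p)^n + u^n) \geq s^n$. -/
lemma sym_pow_ge (s a : ℝ) (hs : 0 ≤ s) (ha : 0 ≤ a) (n : ℕ) :
    2 * s ^ n ≤ (s + a) ^ n + (s - a) ^ n := by
  rw [sub_eq_add_neg, add_pow, add_pow, ← Finset.sum_add_distrib]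
  have hmem : n ∈ Finset.range (n + 1) := Finset.self_mem_range_succ n
  have hterm : (2 : ℝ) * s ^ n
      = s ^ n * a ^ (n - n) * (n.choose n : ℝ)
        + s ^ n * (-a) ^ (n - n) * (n.choose n : ℝ) := by
    simp [Nat.choose_self]; ring
  rw [hterm]
  refine Finset.single_le_sum (f := fun k => s ^ k * a ^ (n - k) * (n.choose k : ℝ)
      + s ^ k * (-a) ^ (n - k) * (n.choose k : ℝ)) (fun k _ => ?_) hmem
  have : s ^ k * a ^ (n - k) * (n.choose k : ℝ)
        + s ^ k * (-a) ^ (n - k) * (n.choose k : ℝ)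
      = s ^ k * (n.choose k : ℝ) * (a ^ (n - k) + (-a) ^ (n - k)) := by ring
  show (0:ℝ) ≤ s ^ k * a ^ (n - k) * (n.choose k : ℝ)
      + s ^ k * (-a) ^ (n - k) * (n.choose k : ℝ)
  rw [this]
  have h1 : (0 : ℝ) ≤ a ^ (n - k) + (-a) ^ (n - k) := by
    rcases Nat.even_or_odd (n - k) with h | h
    · rw [h.neg_pow]
      positivity
    · rw [h.neg_pow]
      simp
  positivity

theorem fidelity_ge_first_order (n : ℕ) (hn : 1 ≤ n) (p : ℝ)
    (hp0 : 0 ≤ p) (hp1 : p ≤ 1) :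
    (1 - p) ^ n
      ≤ (1 / 2) * ((1 - 2 / 3 * p) ^ n + (2 / 3 * p) ^ n
          + (1 - 4 / 3 * p) ^ n) := by
  have hs : (0 : ℝ) ≤ 1 - p := by linarith
  have ha : (0 : ℝ) ≤ p / 3 := by linarith
  have key := sym_pow_ge (1 - p) (p / 3) hs ha n
  have h1 : (1 : ℝ) - 2 / 3 * p = (1 - p) + p / 3 := by ring
  have h2 : (1 : ℝ) - 4 / 3 * p = (1 - p) - p / 3 := by ring
  have h3 : (0 : ℝ) ≤ (2 / 3 * p) ^ n := by positivity
  rw [h1, h2]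
  linarith
end
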